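/- arXiv:2509.11962 — 7 statements merged into one kernel-verified Lean document; each statement's English description precedes it below -/
import Mathlib

section
/- Assume the set (f, T, λ) is identifiable up to a block-affine transformation and the autoregressive order is R = 0, so each sufficient statistic T_i depends on z_i only: T̃(f̃⁻¹(x)) = A·T(f⁻¹(x)) + c for all x, with A a block-permutation matrix and c a constant vector. Assume further: (i) the non-noisy model x = f(z), so that z = f⁻¹(x) and z̃ = f̃⁻¹(x); (ii) for every i = 1,…,P there is a function g̃_i : ℝ^k → ℝ such that g̃_i(T̃_i(z̃_i)) = a_i z̃_i for all z̃_i, with a_i ≠ 0. Then f̃⁻¹(x) = z̃ = P(g_1(z_1),…,g_P(z_P))ᵀ, where P is a P×P permutation matrix and g_1,…,g_P are component-wise functions ℝ → ℝ. -/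
open Matrix

/-- Proposition 1: Assume `(f, T, λ)` is identifiable up to a block-affine
transformation with autoregressive order `R = 0`, i.e. `T̃(f̃⁻¹(x)) = A·T(f⁻¹(x)) + c`
for all `x = f(z)` with `A` a block-permutation matrix (invertible `k × k` blocks arranged
according to a permutation `σ` of the `P` components) and `c` a constant vector.
Assume further (i) the non-noisy model `x = f(z)` (with unmixing functions `g`, `gtil`,
so `z = f⁻¹(x)` and `z̃ = f̃⁻¹(x)`), and (ii) for every `i` there is `g̃_i : ℝ^k → ℝ`
with `g̃_i(T̃_i(z̃_i)) = a_i z̃_i` for all `z̃_i`, where `a_i ≠ 0`.  Then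
`f̃⁻¹(x) = z̃ = P(g_1(z_1), …, g_P(z_P))ᵀ` for a permutation matrix `P` and
component-wise functions `g_1, …, g_P : ℝ → ℝ`. -/
theorem block_affine_identifiability_componentwise_nonlinearity
    {P S k : ℕ}
    (f ftil : (Fin P → ℝ) → (Fin S → ℝ))
    (g gtil : (Fin S → ℝ) → (Fin P → ℝ))
    (T Ttil : Fin P → Fin k → ℝ → ℝ)
    (A : Matrix (Fin P × Fin k) (Fin P × Fin k) ℝ) (c : Fin P × Fin k → ℝ)
    (σ : Equiv.Perm (Fin P)) (B : Fin P → Matrix (Fin k) (Fin k) ℝ)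
    (hB : ∀ i, IsUnit (B i))
    (hA : ∀ m n : Fin P × Fin k, A m n = if n.1 = σ m.1 then B m.1 m.2 n.2 else 0)
    -- (i) non-noisy BSS model: `g` and `gtil` invert `f` and `ftil` on the latent space
    (hfinj : Function.Injective f) (hftilinj : Function.Injective ftil)
    (hg : ∀ z, g (f z) = z) (hgtil : ∀ z, gtil (ftil z) = z)
    -- block-affine identifiability of the sufficient statistics (R = 0)
    (hid : ∀ z : Fin P → ℝ,
      (fun m : Fin P × Fin k => Ttil m.1 m.2 (gtil (f z) m.1)) =
        A.mulVec (fun m : Fin P × Fin k => T m.1 m.2 (z m.1)) + c)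
    -- (ii) each `T̃_i` can be reduced to a nonzero multiple of the identity
    (hred : ∀ i : Fin P, ∃ (gt : (Fin k → ℝ) → ℝ) (a : ℝ), a ≠ 0 ∧
      ∀ t : ℝ, gt (fun j => Ttil i j t) = a * t) :
    ∃ (τ : Equiv.Perm (Fin P)) (gcomp : Fin P → ℝ → ℝ),
      ∀ (z : Fin P → ℝ) (i : Fin P), gtil (f z) i = gcomp (τ i) (z (τ i)) := by
  choose gt a ha hgt using hred
  refine ⟨σ, fun p t => (a (σ.symm p))⁻¹ * gt (σ.symm p)
    (fun j => (∑ j' : Fin k, B (σ.symm p) j j' * T p j' t) + c (σ.symm p, j)), ?_⟩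
  intro z i
  have h1 : ∀ j, Ttil i j (gtil (f z) i) =
      (∑ j' : Fin k, B i j j' * T (σ i) j' (z (σ i))) + c (i, j) := by
    intro j
    have h := congrFun (hid z) (i, j)
    simp only [Matrix.mulVec, dotProduct, Pi.add_apply, Fintype.sum_prod_type, hA] at h
    rw [h]
    congr 1
    rw [Finset.sum_comm]
    simp [Finset.mul_sum, mul_ite, Finset.sum_ite_eq, eq_comm]
  have h2 := hgt i (gtil (f z) i)
  have h3 : (fun j => Ttil i j (gtil (f z) i)) =
      (fun j => (∑ j' : Fin k, B i j j' * T (σ i) j' (z (σ i))) + c (i, j)) :=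
    funext h1
  rw [h3] at h2
  simp only [Equiv.symm_apply_apply]
  rw [h2, inv_mul_cancel_left₀ (ha i)]
end

section
/- Assume the set (f, T, λ) is identifiable up to a block-affine transformation, the data are generated through the non-noisy model x = f(z) (so z = f⁻¹(x) and z̃ = f̃⁻¹(x)), and both the latent components z_i and the estimates z̃_i are Gaussian in the sense that the sufficient statistics are T_i(z_i) = (z_i, z_i²)ᵀ and T̃_i(z̃_i) = (z̃_i, z̃_i²)ᵀ for every i = 1,…,P, with the block-affine relation T̃(z̃) = A·T(z) + c holding for all z ∈ ℝ^P. Then z̃ = PΛz + d, where P is a P×P permutation matrix, Λ is a diagonal matrix with nonzero diagonal entries, and d is a constant vector. -/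
open Matrix

/-- Proposition 2: Assume `(f, T, λ)` is identifiable up to a block-affine
transformation, the data are generated through the non-noisy model `x = f(z)` (with
unmixing functions `g`, `gtil`, so `z = f⁻¹(x)`, `z̃ = f̃⁻¹(x)`), and both latents and
estimates are Gaussian, with sufficient statistics `T_i(z_i) = (z_i, z_i²)ᵀ` and
`T̃_i(z̃_i) = (z̃_i, z̃_i²)ᵀ`, the block-affine relation `T̃(z̃) = A·T(z) + c` holding for
all `z ∈ ℝ^P`.  Then `z̃ = PΛz + d` for a permutation matrix `P`, a diagonal matrix `Λ`
with nonzero diagonal entries, and a constant vector `d`. -/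
theorem gaussian_block_affine_identifiability
    {P S : ℕ}
    (f ftil : (Fin P → ℝ) → (Fin S → ℝ))
    (g gtil : (Fin S → ℝ) → (Fin P → ℝ))
    (A : Matrix (Fin P × Fin 2) (Fin P × Fin 2) ℝ) (c : Fin P × Fin 2 → ℝ)
    (σ : Equiv.Perm (Fin P)) (B : Fin P → Matrix (Fin 2) (Fin 2) ℝ)
    (hB : ∀ i, IsUnit (B i))
    (hA : ∀ m n : Fin P × Fin 2, A m n = if n.1 = σ m.1 then B m.1 m.2 n.2 else 0)
    (hfinj : Function.Injective f) (hftilinj : Function.Injective ftil)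
    (hg : ∀ z, g (f z) = z) (hgtil : ∀ z, gtil (ftil z) = z)
    -- block-affine relation for the Gaussian sufficient statistics (z, z²)
    (hid : ∀ z : Fin P → ℝ,
      (fun m : Fin P × Fin 2 =>
          if m.2 = 0 then gtil (f z) m.1 else (gtil (f z) m.1) ^ 2) =
        A.mulVec (fun m : Fin P × Fin 2 => if m.2 = 0 then z m.1 else (z m.1) ^ 2) + c) :
    ∃ (τ : Equiv.Perm (Fin P)) (Λ : Fin P → ℝ) (d : Fin P → ℝ),
      (∀ i, Λ i ≠ 0) ∧
      ∀ (z : Fin P → ℝ) (i : Fin P), gtil (f z) i = Λ (τ i) * z (τ i) + d i := by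

  -- key pointwise consequence of `hid`
  have key : ∀ (z : Fin P → ℝ) (i : Fin P) (m2 : Fin 2),
      (if m2 = 0 then gtil (f z) i else (gtil (f z) i) ^ 2) =
        B i m2 0 * z (σ i) + B i m2 1 * (z (σ i)) ^ 2 + c (i, m2) := by
    intro z i m2
    have h := congrFun (hid z) (i, m2)
    simp only [Matrix.mulVec, dotProduct, Pi.add_apply, hA,
      Fintype.sum_prod_type] at h
    rw [h]
    rw [Finset.sum_eq_single (σ i)]
    · simp [Fin.sum_univ_two]
    · intro b _ hb
      simp [hb]
    · intro hmem; exact absurd (Finset.mem_univ _) hmem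
  -- quadratic coefficient vanishes
  have hb0 : ∀ i : Fin P, B i 0 1 = 0 := by
    intro i
    have h : ∀ t : ℝ,
        (B i 0 0 * t + B i 0 1 * t ^ 2 + c (i, 0)) ^ 2 =
          B i 1 0 * t + B i 1 1 * t ^ 2 + c (i, 1) := by
      intro t
      have h0 := key (fun _ => t) i 0
      have h1 := key (fun _ => t) i 1
      norm_num at h0
      norm_num at h1
      rw [h0] at h1
      linear_combination h1
    have hsq : (B i 0 1) ^ 2 = 0 := by
      linear_combination (h 2 + h (-2) - 4 * h 1 - 4 * h (-1) + 6 * h 0) / 24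
    exact pow_eq_zero_iff (two_ne_zero) |>.mp hsq
  -- linear coefficient is nonzero
  have ha0 : ∀ i : Fin P, B i 0 0 ≠ 0 := by
    intro i hia
    have hdet := (Matrix.isUnit_iff_isUnit_det (B i)).mp (hB i)
    rw [Matrix.det_fin_two, hia, hb0 i] at hdet
    simp at hdet
  refine ⟨σ, fun j => B (σ.symm j) 0 0, fun i => c (i, 0), ?_, ?_⟩
  · intro j; exact ha0 _
  · intro z i
    have h0 := key z i 0
    norm_num at h0
    rw [h0, hb0 i]
    simp only [Equiv.symm_apply_apply]
    ring
end

section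
/- Assume the set (f, T, λ) is identifiable up to a block-affine transformation, the data are generated through the non-noisy model x^t = f(z^t), and both the latent components z_i and the estimates z̃_i are generated through the Gaussian autoregressive process of order R ≥ 1, so that the minimal sufficient statistics of component i are the monomials (z_i^t)², z_i^t, z_i^t z_i^{t−r}, z_i^{t−r}, and z_i^{t−r₁} z_i^{t−r₂} for r, r₁, r₂ ∈ {1,…,R}, and the block-affine relation between T̃ evaluated at (z̃^t,…,z̃^{t−R}) and T evaluated at (z^t,…,z^{t−R}) holds identically for all values in ℝ^{R+1} and all time points t. Then z̃^t = PΛz^t + d, where P is a P×P permutation matrix, Λ is a diagonal matrix with nonzero diagonal entries, and d is a constant vector. -/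
open Matrix

/-- Index type for the minimal sufficient statistics of one component of a Gaussian
autoregressive process of order `R`: the monomials of degree 1 (`z^{t-r}`, `r = 0, …, R`)
and of degree 2 (`z^{t-r₁} z^{t-r₂}`, `0 ≤ r₁ ≤ r₂ ≤ R`), which comprises
`(z^t)², z^t, z^t z^{t-r}, z^{t-r}` and `z^{t-r₁} z^{t-r₂}` for `r, r₁, r₂ ∈ {1, …, R}`. -/
abbrev ARStatIndex (R : ℕ) :=
  Fin (R + 1) ⊕ {p : Fin (R + 1) × Fin (R + 1) // p.1 ≤ p.2}

/-- The sufficient statistic indexed by `s`, evaluated on the vector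
`w = (z^t, z^{t-1}, …, z^{t-R})` of current and lagged values of one component. -/
def arStat {R : ℕ} (s : ARStatIndex R) (w : Fin (R + 1) → ℝ) : ℝ :=
  match s with
  | .inl a => w a
  | .inr p => w p.1.1 * w p.1.2

/-- Proposition 3: Assume `(f, T, λ)` is identifiable up to a block-affine
transformation, the data are generated through the non-noisy model `x^t = f(z^t)` (with
unmixing functions `g`, `gtil`, so the estimates are `z̃^t = f̃⁻¹(x^t) = f̃⁻¹(f(z^t))`),
and both the latents `z_i` and the estimates `z̃_i` follow the Gaussian autoregressive
process of order `R ≥ 1`, so that the minimal sufficient statistics of component `i` are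
the monomials of degree 1 and 2 in `(z_i^t, …, z_i^{t-R})`, and the block-affine relation
between `T̃` at `(z̃^t, …, z̃^{t-R})` and `T` at `(z^t, …, z^{t-R})` holds identically for
all lagged values in `ℝ^{R+1}` (hence at all time points `t`).  Then
`z̃^t = PΛz^t + d` for a permutation matrix `P`, a diagonal matrix `Λ` with nonzero
diagonal entries, and a constant vector `d`. -/
theorem gaussian_ar_block_affine_identifiability
    {P S R : ℕ} (hR : 1 ≤ R)
    (f ftil : (Fin P → ℝ) → (Fin S → ℝ))
    (g gtil : (Fin S → ℝ) → (Fin P → ℝ))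
    (A : Matrix (Fin P × ARStatIndex R) (Fin P × ARStatIndex R) ℝ)
    (c : Fin P × ARStatIndex R → ℝ)
    (σ : Equiv.Perm (Fin P)) (B : Fin P → Matrix (ARStatIndex R) (ARStatIndex R) ℝ)
    (hB : ∀ i, IsUnit (B i))
    (hA : ∀ m n : Fin P × ARStatIndex R,
      A m n = if n.1 = σ m.1 then B m.1 m.2 n.2 else 0)
    (hfinj : Function.Injective f) (hftilinj : Function.Injective ftil)
    (hg : ∀ z, g (f z) = z) (hgtil : ∀ z, gtil (ftil z) = z)
    -- block-affine relation between the sufficient statistics of the estimated and true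
    -- latent trajectories, holding for all trajectories `zs = (z^t, z^{t-1}, …, z^{t-R})`
    (hid : ∀ zs : Fin (R + 1) → (Fin P → ℝ),
      (fun m : Fin P × ARStatIndex R => arStat m.2 (fun r => gtil (f (zs r)) m.1)) =
        A.mulVec (fun m : Fin P × ARStatIndex R => arStat m.2 (fun r => zs r m.1)) + c) :
    ∃ (τ : Equiv.Perm (Fin P)) (Λ : Fin P → ℝ) (d : Fin P → ℝ),
      (∀ i, Λ i ≠ 0) ∧
      ∀ (z : Fin P → ℝ) (i : Fin P), gtil (f z) i = Λ (τ i) * z (τ i) + d i := by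
  classical
  -- row simplification of the block matrix
  have hrow : ∀ (i : Fin P) (s : ARStatIndex R) (v : Fin P × ARStatIndex R → ℝ),
      A.mulVec v (i, s) = ∑ n : ARStatIndex R, B i s n * v (σ i, n) := by
    intro i s v
    simp only [Matrix.mulVec, dotProduct, Fintype.sum_prod_type, hA, ite_mul, zero_mul]
    rw [Finset.sum_comm]
    simp [Finset.sum_ite_eq']
  -- the key identity for constant trajectories
  have keyz : ∀ (z : Fin P → ℝ) (i : Fin P) (s : ARStatIndex R),
      arStat s (fun _ => gtil (f z) i) =
        (∑ n : ARStatIndex R, B i s n * arStat n (fun _ => z (σ i))) + c (i, s) := by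
    intro z i s
    have h := congrFun (hid (fun _ => z)) (i, s)
    simp only [Pi.add_apply] at h
    rw [hrow i s] at h
    exact h
  -- evaluation of the statistics sum at constant vectors
  have hsum : ∀ (i : Fin P) (s : ARStatIndex R) (u : ℝ),
      (∑ n : ARStatIndex R, B i s n * arStat n (fun _ => u)) =
        (∑ a : Fin (R + 1), B i s (Sum.inl a)) * u +
          (∑ p : {p : Fin (R + 1) × Fin (R + 1) // p.1 ≤ p.2}, B i s (Sum.inr p)) * (u * u) := by
    intro i s u
    rw [Fintype.sum_sum_type]
    simp [arStat, Finset.sum_mul]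
  set L : Fin P → ℝ := fun i => ∑ a : Fin (R + 1), B i (Sum.inl 0) (Sum.inl a) with hLdef
  set Q : Fin P → ℝ := fun i =>
    ∑ p : {p : Fin (R + 1) × Fin (R + 1) // p.1 ≤ p.2}, B i (Sum.inl 0) (Sum.inr p) with hQdef
  -- affine-quadratic form of the estimates
  have haff : ∀ (z : Fin P → ℝ) (i : Fin P),
      gtil (f z) i = L i * z (σ i) + Q i * (z (σ i) * z (σ i)) + c (i, Sum.inl 0) := by
    intro z i
    have h := keyz z i (Sum.inl 0)
    rw [hsum i (Sum.inl 0) (z (σ i))] at h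
    simpa [arStat] using h
  -- the quadratic coefficient vanishes
  have hQ0 : ∀ i : Fin P, Q i = 0 := by
    intro i
    set p00 : ARStatIndex R := Sum.inr ⟨(0, 0), le_rfl⟩ with hp00
    have e : ∀ u : ℝ,
        (L i * u + Q i * (u * u) + c (i, Sum.inl 0)) *
            (L i * u + Q i * (u * u) + c (i, Sum.inl 0)) =
          (∑ a : Fin (R + 1), B i p00 (Sum.inl a)) * u +
            (∑ p : {p : Fin (R + 1) × Fin (R + 1) // p.1 ≤ p.2}, B i p00 (Sum.inr p)) *
              (u * u) + c (i, p00) := by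
      intro u
      have h := keyz (fun _ => u) i p00
      rw [hsum i p00 u] at h
      have hval : arStat p00 (fun _ => gtil (f (fun _ => u)) i) =
          gtil (f (fun _ => u)) i * gtil (f (fun _ => u)) i := rfl
      rw [hval] at h
      have ha := haff (fun _ => u) i
      rw [ha] at h
      exact h
    have hsq : Q i ^ 2 = 0 := by
      have e2 := e 2
      have em2 := e (-2)
      have e1 := e 1
      have em1 := e (-1)
      have e0 := e 0
      linear_combination e2 / 24 + em2 / 24 - e1 / 6 - em1 / 6 + e0 / 4
    exact pow_eq_zero_iff (by norm_num) |>.mp hsq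
  -- affine form
  have haff' : ∀ (z : Fin P → ℝ) (i : Fin P),
      gtil (f z) i = L i * z (σ i) + c (i, Sum.inl 0) := by
    intro z i
    rw [haff z i, hQ0 i]
    ring
  -- the linear coefficients are nonzero
  have hL : ∀ i : Fin P, L i ≠ 0 := by
    intro i hLi
    set z0 : Fin P → ℝ := fun _ => 0 with hz0
    set z1 : Fin P → ℝ := Function.update (fun _ => (0 : ℝ)) (σ i) 1 with hz1
    have heq : gtil (f z1) = gtil (f z0) := by
      funext k
      rw [haff' z1 k, haff' z0 k]
      by_cases hk : k = i
      · subst hk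
        rw [hLi]
        ring
      · have : σ k ≠ σ i := fun h => hk (σ.injective h)
        simp [hz1, hz0, Function.update_of_ne this]
    have hid1 := hid (fun _ => z1)
    have hid0 := hid (fun _ => z0)
    rw [heq] at hid1
    have hA1 : A.mulVec (fun m : Fin P × ARStatIndex R => arStat m.2 (fun _ => z1 m.1)) =
        A.mulVec (fun m : Fin P × ARStatIndex R => arStat m.2 (fun _ => z0 m.1)) := by
      have h := hid1.symm.trans hid0
      exact add_right_cancel h
    -- restrict to the i-th block
    have hblk : (B i).mulVec (fun n => arStat n (fun _ => z1 (σ i))) =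
        (B i).mulVec (fun n => arStat n (fun _ => z0 (σ i))) := by
      funext s
      have h1 := congrFun hA1 (i, s)
      rw [hrow, hrow] at h1
      simpa [Matrix.mulVec, dotProduct] using h1
    have hdet : IsUnit (B i).det := (Matrix.isUnit_iff_isUnit_det _).mp (hB i)
    have hw : (fun n : ARStatIndex R => arStat n (fun _ => z1 (σ i))) =
        (fun n : ARStatIndex R => arStat n (fun _ => z0 (σ i))) := by
      have h := congrArg (fun v => (B i)⁻¹.mulVec v) hblk
      simpa [Matrix.mulVec_mulVec, Matrix.nonsing_inv_mul _ hdet] using h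
    have h0 := congrFun hw (Sum.inl 0)
    simp [arStat, hz1, hz0] at h0
  refine ⟨σ, fun j => L (σ.symm j), fun i => c (i, Sum.inl 0), fun j => hL _, ?_⟩
  intro z i
  have := haff' z i
  simpa using this
end

section
/- Let k ≥ 2 and let T : ℝ → ℝ^k be differentiable at every point. Suppose that for every nonzero λ ∈ ℝ^k the function x ↦ ⟨λ, T(x)⟩ is not constant on ℝ. Then there exist k points x_1,…,x_k ∈ ℝ such that the derivative vectors T′(x_1),…,T′(x_k) are linearly independent in ℝ^k. -/
/-- Let `k ≥ 2` and `T : ℝ → ℝ^k` be differentiable everywhere. If for every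
nonzero `λ ∈ ℝ^k` the function `x ↦ ⟨λ, T(x)⟩` is not constant on `ℝ` (the strongly
exponential condition), then there exist `k` points `x_1, …, x_k` such that the derivative
vectors `T′(x_1), …, T′(x_k)` are linearly independent in `ℝ^k`. -/
theorem exists_linearIndependent_derivs_of_strongly_exponential
    {k : ℕ} (hk : 2 ≤ k) (T : Fin k → ℝ → ℝ)
    (hdiff : ∀ j, Differentiable ℝ (T j))
    (hse : ∀ lam : Fin k → ℝ, lam ≠ 0 → ¬ ∃ C : ℝ, ∀ x : ℝ, ∑ j, lam j * T j x = C) :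
    ∃ x : Fin k → ℝ,
      LinearIndependent ℝ (fun i : Fin k => fun j : Fin k => deriv (T j) (x i)) := by
  set v : ℝ → (Fin k → ℝ) := fun x j => deriv (T j) x with hv
  -- Step 1: span of range v is ⊤
  have hspan : Submodule.span ℝ (Set.range v) = ⊤ := by
    by_contra hlt
    obtain ⟨f, hf0, hfk⟩ := Submodule.exists_dual_map_eq_bot_of_lt_top
      (lt_top_iff_ne_top.2 hlt) inferInstance
    set lam : Fin k → ℝ := fun j => f (fun i => if j = i then 1 else 0) with hlam
    have hfeq : ∀ w : Fin k → ℝ, f w = ∑ j, w j * lam j := by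
      intro w
      rw [LinearMap.pi_apply_eq_sum_univ f w]
      simp [lam, smul_eq_mul]
    have hlamne : lam ≠ 0 := by
      intro h
      apply hf0
      apply LinearMap.ext
      intro w
      rw [hfeq]
      simp [h]
    refine hse lam hlamne ⟨∑ j, lam j * T j 0, ?_⟩
    have hg : ∀ x : ℝ, HasDerivAt (fun x => ∑ j, lam j * T j x)
        (∑ j, lam j * deriv (T j) x) x := by
      intro x
      exact HasDerivAt.fun_sum fun j _ => ((hdiff j x).hasDerivAt).const_mul (lam j)
    have hzero : ∀ x : ℝ, (∑ j, lam j * deriv (T j) x) = 0 := by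
      intro x
      have hmem : v x ∈ Submodule.span ℝ (Set.range v) :=
        Submodule.subset_span ⟨x, rfl⟩
      have : f (v x) ∈ (Submodule.span ℝ (Set.range v)).map f :=
        Submodule.mem_map_of_mem hmem
      rw [hfk] at this
      have hfz : f (v x) = 0 := this
      have heq : (∑ j, lam j * deriv (T j) x) = f (v x) := by
        rw [hfeq]
        exact Finset.sum_congr rfl fun j _ => mul_comm _ _
      rw [heq, hfz]
    intro x
    have hconst : (fun x => ∑ j, lam j * T j x) x = (fun x => ∑ j, lam j * T j x) 0 :=
      is_const_of_deriv_eq_zero (fun y => (hg y).differentiableAt)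
        (fun y => by rw [(hg y).deriv, hzero]) x 0
    exact hconst
  -- Step 2: extract k linearly independent vectors from range v
  obtain ⟨b, hb₁, hb₂, hb₃⟩ := exists_linearIndependent ℝ (Set.range v)
  rw [hspan] at hb₂
  have B : Module.Basis b ℝ (Fin k → ℝ) := Module.Basis.mk hb₃ (by rw [Subtype.range_coe, hb₂])
  haveI : Fintype b := FiniteDimensional.fintypeBasisIndex B
  have hcard : Fintype.card b = k := by
    have := Module.finrank_eq_card_basis B
    simpa using this.symm
  obtain ⟨e⟩ : Nonempty (Fin k ≃ b) := ⟨(Fintype.equivFinOfCardEq hcard).symm⟩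
  choose y hy using fun i : Fin k => hb₁ (e i).2
  refine ⟨y, ?_⟩
  have : (fun i : Fin k => v (y i)) = fun i => ((e i : Fin k → ℝ)) := by
    funext i; exact hy i
  have hli : LinearIndependent ℝ (fun i : Fin k => ((e i : Fin k → ℝ))) :=
    hb₃.comp e e.injective
  exact this ▸ hli
end

section
/- Let P ≥ 1 and let v : ℝ^P → ℝ^P be continuously differentiable such that the Jacobian matrix of v is invertible at every point, and such that at every z ∈ ℝ^P each row of the Jacobian of v has at most one nonzero entry. Then there exist a permutation σ of {1,…,P} and functions h_1,…,h_P : ℝ → ℝ such that v_i(z) = h_i(z_{σ(i)}) for all z ∈ ℝ^P and all i = 1,…,P; that is, v is the composition of a permutation of coordinates with component-wise functions. -/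
/-- Let `v : ℝ^P → ℝ^P` be continuously differentiable with everywhere
invertible Jacobian, such that at every point each row of the Jacobian has at most one
nonzero entry. Then `v` is the composition of a permutation of coordinates with
component-wise functions: `v_i(z) = h_i(z_{σ(i)})`. -/
theorem jacobian_rowwise_sparse_implies_componentwise
    {P : ℕ} (hP : 1 ≤ P)
    (v : (Fin P → ℝ) → (Fin P → ℝ))
    (hv : ContDiff ℝ 1 v)
    (hinv : ∀ z : Fin P → ℝ,
      IsUnit (Matrix.of fun i j : Fin P => fderiv ℝ v z (Pi.single j 1) i))
    (hrow : ∀ (z : Fin P → ℝ) (i j j' : Fin P),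
      fderiv ℝ v z (Pi.single j 1) i ≠ 0 → fderiv ℝ v z (Pi.single j' 1) i ≠ 0 → j = j') :
    ∃ (σ : Equiv.Perm (Fin P)) (h : Fin P → ℝ → ℝ),
      ∀ (z : Fin P → ℝ) (i : Fin P), v z i = h i (z (σ i)) := by
  classical
  set J : (Fin P → ℝ) → Fin P → Fin P → ℝ :=
    fun z i j => fderiv ℝ v z (Pi.single j 1) i with hJdef
  have hvdiff : Differentiable ℝ v := hv.differentiable one_ne_zero
  have hJcont : ∀ i j, Continuous fun z => J z i j := by
    intro i j
    have h1 : Continuous (fderiv ℝ v) := hv.continuous_fderiv one_ne_zero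
    exact (continuous_apply i).comp (h1.clm_apply continuous_const)
  -- each row has a nonzero entry
  have hex : ∀ (z : Fin P → ℝ) (i : Fin P), ∃ j, J z i j ≠ 0 := by
    intro z i
    by_contra h
    push_neg at h
    have hu := hinv z
    rw [Matrix.isUnit_iff_isUnit_det] at hu
    have hdet : (Matrix.of fun i j : Fin P => J z i j).det = 0 :=
      Matrix.det_eq_zero_of_row_eq_zero i (fun j => h j)
    rw [hdet] at hu
    simpa using hu
  -- the nonzero entry position is independent of z
  have hc : ∀ i : Fin P, ∃ j, ∀ z, J z i j ≠ 0 := by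
    intro i
    obtain ⟨j₀, hj₀⟩ := hex 0 i
    refine ⟨j₀, ?_⟩
    have hopen : IsOpen {z : Fin P → ℝ | J z i j₀ ≠ 0} :=
      isOpen_compl_singleton.preimage (hJcont i j₀)
    have hcompl : {z : Fin P → ℝ | J z i j₀ ≠ 0}ᶜ
        = ⋃ j ∈ ({j₀}ᶜ : Set (Fin P)), {z : Fin P → ℝ | J z i j ≠ 0} := by
      ext z
      simp only [Set.mem_compl_iff, Set.mem_setOf_eq, not_not, Set.mem_iUnion,
        Set.mem_singleton_iff]
      constructor
      · intro h0
        obtain ⟨j, hj⟩ := hex z i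
        refine ⟨j, ⟨fun hj' => ?_, hj⟩⟩
        subst hj'; exact hj h0
      · rintro ⟨j, hjne, hj⟩
        by_contra h0
        exact hjne (hrow z i j j₀ hj h0)
    have hclosed : IsClosed {z : Fin P → ℝ | J z i j₀ ≠ 0} := by
      rw [← isOpen_compl_iff, hcompl]
      exact isOpen_biUnion fun j _ => isOpen_compl_singleton.preimage (hJcont i j)
    have huniv : {z : Fin P → ℝ | J z i j₀ ≠ 0} = Set.univ :=
      IsClopen.eq_univ ⟨hclosed, hopen⟩ ⟨0, hj₀⟩
    intro z
    have : z ∈ {z : Fin P → ℝ | J z i j₀ ≠ 0} := huniv ▸ Set.mem_univ z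
    exact this
  choose c hcprop using hc
  -- c is surjective, hence bijective
  have hcs : Function.Surjective c := by
    intro j
    by_contra h
    push_neg at h
    have hcol : ∀ i' : Fin P, J 0 i' j = 0 := by
      intro i'
      by_contra h0
      exact h i' (hrow 0 i' (c i') j (hcprop i' 0) h0)
    have hu := hinv 0
    rw [Matrix.isUnit_iff_isUnit_det] at hu
    have hdet : (Matrix.of fun i j : Fin P => J 0 i j).det = 0 :=
      Matrix.det_eq_zero_of_column_eq_zero j (fun i' => hcol i')
    rw [hdet] at hu
    simpa using hu
  have hbij : Function.Bijective c := ⟨Finite.injective_iff_surjective.mpr hcs, hcs⟩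
  -- off-position partial derivatives vanish
  have hJzero : ∀ (z : Fin P → ℝ) (i j : Fin P), j ≠ c i → J z i j = 0 := by
    intro z i j hj
    by_contra h0
    exact hj (hrow z i j (c i) h0 (hcprop i z))
  -- updating a coordinate other than c i does not change v _ i
  have hupd : ∀ (i : Fin P) (w : Fin P → ℝ) (j : Fin P), j ≠ c i →
      ∀ t, v (Function.update w j t) i = v w i := by
    intro i w j hj t
    have key : ∀ s : ℝ, HasDerivAt (fun s : ℝ => v (Function.update w j s) i) 0 s := by
      intro s
      have hinner : HasDerivAt (fun s : ℝ => Function.update w j s)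
          (Pi.single j (1:ℝ)) s := by
        have heq : (fun s : ℝ => Function.update w j s)
            = fun s : ℝ => Function.update w j 0 + s • (Pi.single j 1 : Fin P → ℝ) := by
          funext s
          funext k
          by_cases hk : k = j
          · subst hk; simp
          · simp [Function.update, hk, Pi.single_eq_of_ne hk]
        rw [heq]
        have := ((hasDerivAt_id s).smul_const (Pi.single j (1:ℝ))).const_add
          (Function.update w j 0)
        simpa using this
      set u := Function.update w j s with hu
      have houter : HasFDerivAt
          ((ContinuousLinearMap.proj i : (Fin P → ℝ) →L[ℝ] ℝ) ∘ v)
          ((ContinuousLinearMap.proj i).comp (fderiv ℝ v u)) u :=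
        (ContinuousLinearMap.proj i).hasFDerivAt.comp u (hvdiff u).hasFDerivAt
      have hcomp := houter.comp_hasDerivAt s hinner
      have hval : ((ContinuousLinearMap.proj i).comp (fderiv ℝ v u)) (Pi.single j (1:ℝ))
          = 0 := by
        have := hJzero u i j hj
        simpa [hJdef] using this
      rw [hval] at hcomp
      exact hcomp
    have hconst := is_const_of_deriv_eq_zero
      (fun s => (key s).differentiableAt) (fun s => (key s).deriv)
    have := hconst t (w j)
    simpa [Function.update_eq_self] using this
  -- v _ i depends only on coordinate c i
  have hconst : ∀ (i : Fin P) (z z' : Fin P → ℝ), z (c i) = z' (c i) → v z i = v z' i := by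
    intro i z z' hzz'
    have key : ∀ s : Finset (Fin P),
        v (fun k => if k ∈ s then z' k else z k) i = v z i := by
      intro s
      induction s using Finset.induction with
      | empty => simp
      | insert _ _ hj =>
        rename_i j s' ih
        have hw : (fun k => if k ∈ insert j s' then z' k else z k)
            = Function.update (fun k => if k ∈ s' then z' k else z k) j (z' j) := by
          funext k
          by_cases hk : k = j
          · subst hk; simp [hj]
          · simp [Function.update, hk, Finset.mem_insert, hk]
        rw [hw]
        by_cases hji : j = c i
        · subst hji
          have hval : z' (c i) = (fun k => if k ∈ s' then z' k else z k) (c i) := by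
            by_cases hmem : c i ∈ s' <;> simp [hmem, hzz']
          rw [hval, Function.update_eq_self]
          exact ih
        · rw [hupd i _ j hji (z' j)]
          exact ih
    have h1 := key Finset.univ
    simpa using h1.symm
  refine ⟨Equiv.ofBijective c hbij,
    fun i t => v (Function.update (0 : Fin P → ℝ) (c i) t) i, ?_⟩
  intro z i
  simp only [Equiv.ofBijective_apply]
  exact hconst i z (Function.update (0 : Fin P → ℝ) (c i) (z (c i))) (by simp)
end

section
/- Let P, k ≥ 1. For each a ∈ {1,…,P} and b ∈ {1,…,k} let T_{a,b} : ℝ → ℝ be differentiable, and assume for each a that the derivative functions T′_{a,1},…,T′_{a,k} are linearly independent as functions on ℝ. Suppose there exist functions T̄_{i,l} : ℝ → ℝ for i ∈ {1,…,P}, l ∈ {1,…,k} and real coefficients D_{(i,l),(a,b)} such that T̄_{i,l}(z_i) = Σ_{a=1}^P Σ_{b=1}^k D_{(i,l),(a,b)} T_{a,b}(z_a) for all z = (z_1,…,z_P) ∈ ℝ^P and all (i,l). Then D_{(i,l),(a,b)} = 0 whenever a ≠ i; that is, the Pk × Pk matrix D is block-diagonal with k × k blocks. -/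
/-- Let `T_{a,b} : ℝ → ℝ` be differentiable with, for each `a`, linearly
independent derivative functions `T′_{a,1}, …, T′_{a,k}`. If `T̄_{i,l}(z_i) =
Σ_{a,b} D_{(i,l),(a,b)} T_{a,b}(z_a)` for all `z ∈ ℝ^P` and all `(i,l)`, then
`D_{(i,l),(a,b)} = 0` whenever `a ≠ i`; that is, `D` is block-diagonal with `k × k` blocks. -/
theorem coeff_matrix_block_diagonal
    {P k : ℕ} (hP : 1 ≤ P) (hk : 1 ≤ k)
    (T : Fin P → Fin k → ℝ → ℝ)
    (hdiff : ∀ a b, Differentiable ℝ (T a b))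
    (hindep : ∀ (a : Fin P) (α : Fin k → ℝ),
      (∀ t : ℝ, ∑ b, α b * deriv (T a b) t = 0) → α = 0)
    (Tbar : Fin P → Fin k → ℝ → ℝ)
    (D : Matrix (Fin P × Fin k) (Fin P × Fin k) ℝ)
    (hrel : ∀ (z : Fin P → ℝ) (i : Fin P) (l : Fin k),
      Tbar i l (z i) = ∑ a, ∑ b, D (i, l) (a, b) * T a b (z a)) :
    ∀ (i : Fin P) (l : Fin k) (a : Fin P) (b : Fin k), a ≠ i → D (i, l) (a, b) = 0 := by
  intro i l a b hne
  set α : Fin k → ℝ := fun b => D (i, l) (a, b) with hα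
  have hg : ∀ t : ℝ, ∑ b, α b * T a b t = ∑ b, α b * T a b 0 := by
    intro t
    have h1 := hrel (Function.update (0 : Fin P → ℝ) a t) i l
    have h2 := hrel (0 : Fin P → ℝ) i l
    rw [Function.update_of_ne hne.symm] at h1
    have h3 : (∑ a', ∑ b, D (i, l) (a', b) *
        T a' b (Function.update (0 : Fin P → ℝ) a t a'))
        = ∑ a', ∑ b, D (i, l) (a', b) * T a' b ((0 : Fin P → ℝ) a') := by
      rw [← h1, ← h2]
    rw [← Finset.add_sum_erase _ _ (Finset.mem_univ a),
        ← Finset.add_sum_erase _ _ (Finset.mem_univ a)] at h3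
    have h4 : (∑ a' ∈ Finset.univ.erase a, ∑ b, D (i, l) (a', b) *
        T a' b (Function.update (0 : Fin P → ℝ) a t a'))
        = ∑ a' ∈ Finset.univ.erase a, ∑ b, D (i, l) (a', b) * T a' b ((0 : Fin P → ℝ) a') := by
      refine Finset.sum_congr rfl fun a' ha' => ?_
      rw [Function.update_of_ne (Finset.ne_of_mem_erase ha')]
    rw [h4] at h3
    have h5 := add_right_cancel h3
    simpa using h5
  have key : ∀ t : ℝ, ∑ b, α b * deriv (T a b) t = 0 := by
    intro t
    have hd : deriv (fun t => ∑ b, α b * T a b t) t = ∑ b, α b * deriv (T a b) t := by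
      rw [deriv_fun_sum fun b _ => ((hdiff a b).differentiableAt).const_mul (α b)]
      exact Finset.sum_congr rfl fun b _ => deriv_const_mul (α b) (hdiff a b).differentiableAt
    rw [← hd]
    have : (fun t => ∑ b, α b * T a b t) = fun _ => ∑ b, α b * T a b 0 := funext hg
    rw [this, deriv_const]
  have := hindep a α key
  exact congrFun this b
end

section
/- Let k ≥ 2, let I ⊆ ℝ be a nonempty open interval, and let T : ℝ → ℝ^k be twice differentiable with T′(x) ≠ 0 for every x ∈ I. If for every x ∈ I the vectors T′(x) and T″(x) in ℝ^k are linearly dependent (equivalently, the 2×k matrix whose rows are T′(x) and T″(x) has rank at most 1), then there exists a nonzero λ ∈ ℝ^k such that the function x ↦ ⟨λ, T(x)⟩ is constant on I. -/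
/-- If a real function has zero derivative at every point of an open convex set,
it is constant there. -/
lemma const_of_hasDerivAt_zero {I : Set ℝ} (hIopen : IsOpen I) (hconv : Convex ℝ I)
    {f : ℝ → ℝ} (hf : ∀ x ∈ I, HasDerivAt f 0 x) {x y : ℝ} (hx : x ∈ I) (hy : y ∈ I) :
    f x = f y := by
  refine hconv.is_const_of_fderivWithin_eq_zero
    (fun z hz => ((hf z hz).differentiableAt).differentiableWithinAt)
    (fun z hz => ?_) hx hy
  rw [fderivWithin_of_isOpen hIopen hz, (hf z hz).hasFDerivAt.fderiv]
  ext
  simp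

/-- Let `k ≥ 2`, `I ⊆ ℝ` a nonempty open interval, and `T : ℝ → ℝ^k` twice
differentiable with `T′(x) ≠ 0` on `I`. If at every `x ∈ I` the vectors `T′(x)` and `T″(x)`
are linearly dependent, then there is a nonzero `λ ∈ ℝ^k` such that `x ↦ ⟨λ, T(x)⟩` is
constant on `I`. -/
theorem exists_constant_combination_of_dependent_derivs
    {k : ℕ} (hk : 2 ≤ k) (I : Set ℝ)
    (hIopen : IsOpen I) (hIne : I.Nonempty) (hIinterval : I.OrdConnected)
    (T : Fin k → ℝ → ℝ)
    (hdiff : ∀ j, Differentiable ℝ (T j))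
    (hdiff2 : ∀ j, Differentiable ℝ (deriv (T j)))
    (hT' : ∀ x ∈ I, (fun j => deriv (T j) x) ≠ (0 : Fin k → ℝ))
    (hdep : ∀ x ∈ I, ∃ a b : ℝ, (a, b) ≠ (0, 0) ∧
      ∀ j, a * deriv (T j) x + b * deriv (deriv (T j)) x = 0) :
    ∃ lam : Fin k → ℝ, lam ≠ 0 ∧ ∃ C : ℝ, ∀ x ∈ I, ∑ j, lam j * T j x = C := by
  have hconv : Convex ℝ I := convex_iff_ordConnected.mpr hIinterval
  set f : Fin k → ℝ → ℝ := fun j x => deriv (T j) x with hf_def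
  have hfd : ∀ j x, HasDerivAt (f j) (deriv (f j) x) x :=
    fun j x => ((hdiff2 j) x).hasDerivAt
  -- at each point of I there is c with f' = c • f
  have hc : ∀ x ∈ I, ∃ c : ℝ, ∀ j, deriv (f j) x = c * f j x := by
    intro x hx
    obtain ⟨a, b, hab, h⟩ := hdep x hx
    by_cases hb : b = 0
    · exfalso
      have ha : a ≠ 0 := by
        intro h0; exact hab (by simp [h0, hb])
      apply hT' x hx
      funext j
      have hj := h j
      rw [hb] at hj
      have hj' : a * deriv (T j) x = 0 := by linarith
      simpa using (mul_eq_zero.mp hj').resolve_left ha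
    · refine ⟨-a / b, fun j => ?_⟩
      have hj := h j
      have hgoal : deriv (deriv (T j)) x = -a / b * deriv (T j) x := by
        field_simp
        linarith
      exact hgoal
  -- S = sum of squares of f, positive on I
  set S : ℝ → ℝ := fun x => ∑ l, f l x * f l x with hS_def
  have hSpos : ∀ x ∈ I, 0 < S x := by
    intro x hx
    obtain ⟨l, hl⟩ := Function.ne_iff.mp (hT' x hx)
    have hl' : f l x ≠ 0 := by simpa using hl
    have h1 : 0 < f l x * f l x := mul_self_pos.mpr hl'
    have h2 : f l x * f l x ≤ S x :=
      Finset.single_le_sum (fun m _ => mul_self_nonneg (f m x)) (Finset.mem_univ l)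
    linarith
  have hSd : ∀ x ∈ I, ∀ c : ℝ, (∀ j, deriv (f j) x = c * f j x) →
      HasDerivAt S (2 * c * S x) x := by
    intro x hx c hcx
    have : HasDerivAt S (∑ l, (deriv (f l) x * f l x + f l x * deriv (f l) x)) x :=
      HasDerivAt.fun_sum (fun l _ => (hfd l x).mul (hfd l x))
    convert this using 1
    simp only [hcx]
    rw [hS_def]
    simp only [Finset.mul_sum]
    congr 1
    funext l
    ring
  -- fix a base point
  obtain ⟨x₀, hx₀⟩ := hIne
  obtain ⟨i, hi⟩ := Function.ne_iff.mp (hT' x₀ hx₀)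
  have hi' : f i x₀ ≠ 0 := by simpa using hi
  -- the key claim: f j x₀ * f i x = f i x₀ * f j x on I
  have key : ∀ j, ∀ x ∈ I, f j x₀ * f i x - f i x₀ * f j x = 0 := by
    intro j
    set F : ℝ → ℝ := fun x => f j x₀ * f i x - f i x₀ * f j x with hF_def
    set φ : ℝ → ℝ := fun x => F x * F x / S x with hφ_def
    have hφ0 : ∀ x ∈ I, HasDerivAt φ 0 x := by
      intro x hx
      obtain ⟨c, hcx⟩ := hc x hx
      have hF : HasDerivAt F (c * F x) x := by
        have : HasDerivAt F (f j x₀ * deriv (f i) x - f i x₀ * deriv (f j) x) x :=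
          ((hfd i x).const_mul _).sub ((hfd j x).const_mul _)
        convert this using 1
        rw [hcx i, hcx j, hF_def]
        ring
      have hS : HasDerivAt S (2 * c * S x) x := hSd x hx c hcx
      have hSne : S x ≠ 0 := ne_of_gt (hSpos x hx)
      have : HasDerivAt φ
          (((c * F x * F x + F x * (c * F x)) * S x - F x * F x * (2 * c * S x)) / (S x)^2) x :=
        ((hF.mul hF).div hS hSne)
      convert this using 1
      field_simp
      ring
    have hφc : ∀ x ∈ I, φ x = φ x₀ :=
      fun x hx => const_of_hasDerivAt_zero hIopen hconv hφ0 hx hx₀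
    intro x hx
    have hF0 : F x₀ = 0 := by
      show f j x₀ * f i x₀ - f i x₀ * f j x₀ = 0
      ring
    have h0 : φ x₀ = 0 := by
      simp [hφ_def, hF0]
    have : F x * F x / S x = 0 := (hφc x hx).trans h0
    have hSne : S x ≠ 0 := ne_of_gt (hSpos x hx)
    have hFF : F x * F x = 0 := by
      field_simp at this
      rw [mul_zero, sq] at this; exact this
    have := mul_self_eq_zero.mp hFF
    simpa [hF_def] using this
  -- ratio representation
  set r : Fin k → ℝ := fun j => f j x₀ / f i x₀ with hr_def
  have hri : r i = 1 := by simp [hr_def, hi']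
  have hratio : ∀ x ∈ I, ∀ j, f j x = r j * f i x := by
    intro x hx j
    have hkey := key j x hx
    have : f j x₀ * f i x = f i x₀ * f j x := by linarith
    rw [hr_def]
    field_simp
    linarith
  -- choose second index
  haveI : Nontrivial (Fin k) := Fin.nontrivial_iff_two_le.mpr hk
  obtain ⟨m, hm⟩ := exists_ne i
  set lam : Fin k → ℝ :=
    fun j => (if j = m then (1:ℝ) else 0) - r m * (if j = i then 1 else 0) with hlam_def
  have hlam_ne : lam ≠ 0 := by
    intro h0
    have : lam m = 0 := by rw [h0]; rfl
    rw [hlam_def] at this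
    simp [hm] at this
  refine ⟨lam, hlam_ne, ∑ j, lam j * T j x₀, fun x hx => ?_⟩
  set g : ℝ → ℝ := fun x => ∑ j, lam j * T j x with hg_def
  have hg0 : ∀ x ∈ I, HasDerivAt g 0 x := by
    intro x hx
    have hgx : HasDerivAt g (∑ j, lam j * f j x) x :=
      HasDerivAt.fun_sum (fun j _ => ((hdiff j x).hasDerivAt.const_mul _))
    convert hgx using 1
    have hsum : ∑ j, lam j * f j x = ∑ j, lam j * (r j * f i x) := by
      apply Finset.sum_congr rfl
      intro j _
      rw [hratio x hx j]
    rw [hsum, hlam_def]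
    simp only [sub_mul, ite_mul, one_mul, zero_mul, Finset.sum_sub_distrib]
    rw [Finset.sum_ite_eq' Finset.univ m (fun j => r j * f i x)]
    have : ∑ j, (if j = i then r j * f i x else 0) * 1 = r i * f i x := by
      simp [Finset.sum_ite_eq']
    simp [Finset.sum_ite_eq', hri]
  exact const_of_hasDerivAt_zero hIopen hconv hg0 hx hx₀
end
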